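/- arXiv:2509.13118 — 2 statements merged into one kernel-verified Lean document; each statement's English description precedes it below -/
import Mathlib

section
/- Elementary differentials turn grafting into the product ◁: if σ is a rooted tree with vertex set V′ and τ is a rooted tree with vertex set V, with V and V′ disjoint, then F(σ ↷ τ)((f^w)_{w ∈ V′∪V}) = F(τ)((f^v)_{v ∈ V}) ◁ F(σ)((f^u)_{u ∈ V′}) for all smooth f^w ∈ C_d. -/
/-!
In the closed form of `elemDiff`, the summands are indexed by labellings of the vertices by
directions. A labelling of `σ ↷_v τ` is a pair `(a, b)` of labellings of `τ` and `σ`, and its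
summand is the `σ`-summand at `b` times the `τ`-summand at `a` whose factor at `v` carries the
extra derivative `∂_{b(root σ)}`. Summed over `v`, these are the Leibniz expansion of
`∂_{b(root σ)}` of the `τ`-summand; grouping the `b` by the value `i = b(root σ)` then produces
`F(σ)_i ∂_i F(τ)`. The order of the partial derivatives in a factor is an artefact of
`Finset.toList`; smoothness (symmetry of second derivatives) makes it irrelevant.
-/

open Finset

/-- The type of smooth maps from `ℝ^d` to `ℝ^d` (i.e. `C_d = C^∞(ℝ^d, ℝ^d)`). -/
def SmoothMapD (d : ℕ) : Type :=
  {f : (Fin d → ℝ) → (Fin d → ℝ) // ∀ k : ℕ, ContDiff ℝ k f}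

/-- A rooted tree on a finite vertex set `V`: a set `E` of (parent, child) edges together with a
root, such that every non-root vertex has a unique parent, the root has no parent, and every
vertex reaches the root by iteratively passing to its parent. -/
structure RTree (V : Type) [Fintype V] [DecidableEq V] where
  E : Finset (V × V)
  root : V
  parent_unique : ∀ v : V, v ≠ root → ∃! u : V, (u, v) ∈ E
  root_no_parent : ∀ u : V, (u, root) ∉ E
  reaches_root : ∀ v : V, Relation.ReflTransGen (fun a b : V => (b, a) ∈ E) v root

/-- The children of a vertex `v` of a rooted tree: `C_v = {w | (v, w) ∈ E}`. -/
def RTree.children {V : Type} [Fintype V] [DecidableEq V] (τ : RTree V) (v : V) :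
    Finset V :=
  Finset.univ.filter (fun w => (v, w) ∈ τ.E)

/-- Partial derivative `∂_i` of a scalar function on `ℝ^d`. -/
noncomputable def pd {d : ℕ} (i : Fin d) (g : (Fin d → ℝ) → ℝ) : (Fin d → ℝ) → ℝ :=
  fun x => fderiv ℝ g x (Pi.single i 1)

/-- Iterated partial derivatives along a list of directions. -/
noncomputable def pdList {d : ℕ} (l : List (Fin d)) (g : (Fin d → ℝ) → ℝ) : (Fin d → ℝ) → ℝ :=
  l.foldr pd g

/-- The elementary differential of a rooted tree, in closed form: the `j`-th component of
`F(τ)((f^v)_v)(x)` is the sum over all choices of an index `idx v ∈ [d]` for each vertex `v`,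
subject to `idx root = j`, of the product over all vertices `v` of
`∂_{idx c₁} ⋯ ∂_{idx c_k} (f^v)_{idx v} (x)` where `c₁, …, c_k` are the children of `v`.
For smooth inputs this agrees with the usual recursive definition. -/
noncomputable def elemDiff {V : Type} [Fintype V] [DecidableEq V] {d : ℕ} (τ : RTree V)
    (f : V → ((Fin d → ℝ) → (Fin d → ℝ))) : (Fin d → ℝ) → (Fin d → ℝ) :=
  fun x j =>
    ∑ idx : V → Fin d,
      if idx τ.root = j then
        ∏ v : V, pdList ((τ.children v).toList.map idx) (fun y => f v y (idx v)) x
      else 0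

/-- The elementary differential `F(τ)` evaluated on smooth maps. -/
noncomputable def Fel (d : ℕ) {V : Type} [Fintype V] [DecidableEq V] (τ : RTree V)
    (f : V → SmoothMapD d) : (Fin d → ℝ) → (Fin d → ℝ) :=
  elemDiff τ (fun v => (f v).1)
/-- The pre-Lie product `f ◁ g = ∑ i, g_i ∂_i f` on maps `ℝ^d → ℝ^d`. -/
noncomputable def tri {d : ℕ} (f g : (Fin d → ℝ) → (Fin d → ℝ)) :
    (Fin d → ℝ) → (Fin d → ℝ) :=
  fun x j => ∑ i : Fin d, g x i * fderiv ℝ (fun y => f y j) x (Pi.single i 1)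

open scoped ContDiff

section PartialDerivatives

variable {d : ℕ}

theorem contDiff_pd {g : (Fin d → ℝ) → ℝ} (hg : ContDiff ℝ ∞ g) (i : Fin d) :
    ContDiff ℝ ∞ (pd i g) :=
  (contDiff_infty_iff_fderiv.1 hg).2.clm_apply contDiff_const

theorem contDiff_pdList {g : (Fin d → ℝ) → ℝ} (hg : ContDiff ℝ ∞ g) (l : List (Fin d)) :
    ContDiff ℝ ∞ (pdList l g) := by
  induction l with
  | nil => exact hg
  | cons i l ih => exact contDiff_pd ih i

theorem pd_pd_apply {g : (Fin d → ℝ) → ℝ} (hg : ContDiff ℝ ∞ g) (i k : Fin d) (x : Fin d → ℝ) :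
    pd i (pd k g) x = fderiv ℝ (fderiv ℝ g) x (Pi.single i 1) (Pi.single k 1) := by
  have hdg := contDiff_infty_iff_fderiv.1 hg
  have hdg' := contDiff_infty_iff_fderiv.1 hdg.2
  change fderiv ℝ (fun y => fderiv ℝ g y (Pi.single k 1)) x (Pi.single i 1) = _
  rw [fderiv_clm_apply (hdg'.1 x) (differentiableAt_const _)]
  simp

theorem pd_comm {g : (Fin d → ℝ) → ℝ} (hg : ContDiff ℝ ∞ g) (i k : Fin d) :
    pd i (pd k g) = pd k (pd i g) := by
  funext x
  rw [pd_pd_apply hg, pd_pd_apply hg]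
  exact hg.contDiffAt.isSymmSndFDerivAt
    (by rw [minSmoothness_of_isRCLikeNormedField]; exact ENat.LEInfty.out) _ _

theorem pdList_congr_perm {l l' : List (Fin d)} (h : l.Perm l') {g : (Fin d → ℝ) → ℝ}
    (hg : ContDiff ℝ ∞ g) : pdList l g = pdList l' g := by
  induction h with
  | nil => rfl
  | cons i _ ih => exact congrArg (pd i) ih
  | swap i k l => exact pd_comm (contDiff_pdList hg l) k i
  | trans _ _ ih₁ ih₂ => exact ih₁.trans ih₂

theorem pdList_toList_image {α β : Type*} [DecidableEq β] {e : α → β} (he : e.Injective)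
    (s : Finset α) (idx : β → Fin d) {g : (Fin d → ℝ) → ℝ} (hg : ContDiff ℝ ∞ g) :
    pdList ((s.image e).toList.map idx) g = pdList (s.toList.map (idx ∘ e)) g := by
  refine pdList_congr_perm ?_ hg
  rw [← Multiset.coe_eq_coe, ← Multiset.map_coe, ← Multiset.map_coe, Finset.coe_toList,
    Finset.coe_toList, Finset.image_val_of_injOn he.injOn, Multiset.map_map]

theorem pdList_toList_insert {β : Type*} [DecidableEq β] {s : Finset β} {b : β} (hb : b ∉ s)
    (idx : β → Fin d) {g : (Fin d → ℝ) → ℝ} (hg : ContDiff ℝ ∞ g) :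
    pdList ((insert b s).toList.map idx) g = pd (idx b) (pdList (s.toList.map idx) g) :=
  pdList_congr_perm ((Finset.toList_insert hb).map idx) hg

theorem pd_fun_sum {ι : Type*} {s : Finset ι} {P : ι → (Fin d → ℝ) → ℝ} {x : Fin d → ℝ}
    (hP : ∀ v ∈ s, DifferentiableAt ℝ (P v) x) (i : Fin d) :
    pd i (fun y => ∑ v ∈ s, P v y) x = ∑ v ∈ s, pd i (P v) x := by
  simp only [pd, fderiv_fun_sum hP, _root_.sum_apply]

theorem pd_finsetProd {ι : Type*} [DecidableEq ι] {s : Finset ι} {P : ι → (Fin d → ℝ) → ℝ}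
    {x : Fin d → ℝ} (hP : ∀ v ∈ s, DifferentiableAt ℝ (P v) x) (i : Fin d) :
    pd i (fun y => ∏ v ∈ s, P v y) x = ∑ v ∈ s, (∏ u ∈ s.erase v, P u x) * pd i (P v) x := by
  simp only [pd, fderiv_finsetProd hP, _root_.sum_apply, smul_apply, smul_eq_mul]

end PartialDerivatives

section Trees

variable {d : ℕ} {V : Type} [Fintype V] [DecidableEq V]

noncomputable def elemDiffFactor (τ : RTree V) (f : V → (Fin d → ℝ) → (Fin d → ℝ))
    (idx : V → Fin d) (v : V) : (Fin d → ℝ) → ℝ :=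
  pdList ((τ.children v).toList.map idx) (fun y => f v y (idx v))

noncomputable def elemDiffTerm (τ : RTree V) (f : V → (Fin d → ℝ) → (Fin d → ℝ))
    (idx : V → Fin d) (x : Fin d → ℝ) : ℝ :=
  ∏ v, elemDiffFactor τ f idx v x

theorem elemDiff_apply (τ : RTree V) (f : V → (Fin d → ℝ) → (Fin d → ℝ)) (x : Fin d → ℝ)
    (j : Fin d) :
    elemDiff τ f x j = ∑ idx with idx τ.root = j, elemDiffTerm τ f idx x := by
  rw [Finset.sum_filter]
  rfl

theorem tri_elemDiff_apply {V' : Type} [Fintype V'] [DecidableEq V']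
    (F : (Fin d → ℝ) → (Fin d → ℝ)) (s : RTree V') (h : V' → (Fin d → ℝ) → (Fin d → ℝ))
    (x : Fin d → ℝ) (j : Fin d) :
    tri F (elemDiff s h) x j =
      ∑ b, elemDiffTerm s h b x * pd (b s.root) (fun y => F y j) x := by
  simp only [tri, elemDiff_apply, Finset.sum_filter, sum_mul, ite_mul, zero_mul]
  rw [sum_comm]
  exact sum_congr rfl fun b _ => Fintype.sum_ite_eq _ _

variable {f : V → (Fin d → ℝ) → (Fin d → ℝ)} (hf : ∀ v, ContDiff ℝ ∞ (f v))
include hf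

theorem contDiff_elemDiffFactor (τ : RTree V) (idx : V → Fin d) (v : V) :
    ContDiff ℝ ∞ (elemDiffFactor τ f idx v) :=
  contDiff_pdList (contDiff_pi.1 (hf v) _) _

theorem contDiff_elemDiffTerm (τ : RTree V) (idx : V → Fin d) :
    ContDiff ℝ ∞ (elemDiffTerm τ f idx) :=
  contDiff_prod fun v _ => contDiff_elemDiffFactor hf τ idx v

theorem pd_elemDiffTerm (τ : RTree V) (idx : V → Fin d) (i : Fin d) (x : Fin d → ℝ) :
    pd i (elemDiffTerm τ f idx) x = ∑ v, (∏ u ∈ univ.erase v, elemDiffFactor τ f idx u x) *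
      pd i (elemDiffFactor τ f idx v) x :=
  pd_finsetProd (fun v _ => (contDiff_elemDiffFactor hf τ idx v).differentiable
    (by simp) x) i

theorem pd_elemDiff_apply (τ : RTree V) (i j : Fin d) (x : Fin d → ℝ) :
    pd i (fun y => elemDiff τ f y j) x =
      ∑ idx with idx τ.root = j, pd i (elemDiffTerm τ f idx) x := by
  simp only [elemDiff_apply]
  exact pd_fun_sum (fun idx _ => (contDiff_elemDiffTerm hf τ idx).differentiable
    (by simp) x) i

end Trees

section Graft

variable {d : ℕ} {V V' : Type} [Fintype V] [DecidableEq V] [Fintype V'] [DecidableEq V']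
  {τ : RTree V} {s : RTree V'} {t : RTree (V ⊕ V')} {v : V}

variable (hE : t.E = τ.E.image (Prod.map Sum.inl Sum.inl) ∪
    s.E.image (Prod.map Sum.inr Sum.inr) ∪ {(Sum.inl v, Sum.inr s.root)})
include hE

theorem children_inl_of_graft (u : V) :
    t.children (Sum.inl u) = if u = v then insert (Sum.inr s.root) ((τ.children u).image Sum.inl)
      else (τ.children u).image Sum.inl := by
  ext w
  simp only [RTree.children, hE]
  split_ifs <;> aesop

theorem children_inr_of_graft (u : V') :
    t.children (Sum.inr u) = (s.children u).image Sum.inr := by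
  ext w
  simp only [RTree.children, hE]
  aesop

variable {f : V ⊕ V' → (Fin d → ℝ) → (Fin d → ℝ)} (hf : ∀ w, ContDiff ℝ ∞ (f w))
  (a : V → Fin d) (b : V' → Fin d)
include hf

theorem elemDiffFactor_graft_inr (u : V') :
    elemDiffFactor t f (Sum.elim a b) (Sum.inr u) =
      elemDiffFactor s (fun u => f (Sum.inr u)) b u := by
  rw [elemDiffFactor, children_inr_of_graft hE,
    pdList_toList_image Sum.inr_injective _ _ (contDiff_pi.1 (hf _) _)]
  rfl

theorem elemDiffFactor_graft_inl_of_ne {u : V} (hu : u ≠ v) :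
    elemDiffFactor t f (Sum.elim a b) (Sum.inl u) =
      elemDiffFactor τ (fun u => f (Sum.inl u)) a u := by
  rw [elemDiffFactor, children_inl_of_graft hE, if_neg hu,
    pdList_toList_image Sum.inl_injective _ _ (contDiff_pi.1 (hf _) _)]
  rfl

theorem elemDiffFactor_graft_inl_self :
    elemDiffFactor t f (Sum.elim a b) (Sum.inl v) =
      pd (b s.root) (elemDiffFactor τ (fun u => f (Sum.inl u)) a v) := by
  have hg : ContDiff ℝ ∞ fun y => f (Sum.inl v) y (Sum.elim a b (Sum.inl v)) :=
    contDiff_pi.1 (hf _) _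
  rw [elemDiffFactor, children_inl_of_graft hE, if_pos rfl,
    pdList_toList_insert (by simp) _ hg, pdList_toList_image Sum.inl_injective _ _ hg]
  rfl

theorem elemDiffTerm_graft (x : Fin d → ℝ) :
    elemDiffTerm t f (Sum.elim a b) x =
      elemDiffTerm s (fun u => f (Sum.inr u)) b x *
        ((∏ u ∈ univ.erase v, elemDiffFactor τ (fun u => f (Sum.inl u)) a u x) *
          pd (b s.root) (elemDiffFactor τ (fun u => f (Sum.inl u)) a v) x) := by
  have hτ : ∏ u, elemDiffFactor t f (Sum.elim a b) (Sum.inl u) x =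
      (∏ u ∈ univ.erase v, elemDiffFactor τ (fun u => f (Sum.inl u)) a u x) *
        pd (b s.root) (elemDiffFactor τ (fun u => f (Sum.inl u)) a v) x := by
    rw [← mul_prod_erase univ _ (mem_univ v), elemDiffFactor_graft_inl_self hE hf, mul_comm]
    congr 1
    exact prod_congr rfl fun u hu => by
      rw [elemDiffFactor_graft_inl_of_ne hE hf a b (ne_of_mem_erase hu)]
  have hs : ∏ u, elemDiffFactor t f (Sum.elim a b) (Sum.inr u) x =
      elemDiffTerm s (fun u => f (Sum.inr u)) b x :=
    prod_congr rfl fun u _ => by rw [elemDiffFactor_graft_inr hE hf a b u]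
  rw [elemDiffTerm, Fintype.prod_sum_type, hτ, hs, mul_comm]

theorem elemDiff_graft_apply (hroot : t.root = Sum.inl τ.root) (x : Fin d → ℝ) (j : Fin d) :
    elemDiff t f x j =
      ∑ b, elemDiffTerm s (fun u => f (Sum.inr u)) b x *
        ∑ a with a τ.root = j,
          (∏ u ∈ univ.erase v, elemDiffFactor τ (fun u => f (Sum.inl u)) a u x) *
            pd (b s.root) (elemDiffFactor τ (fun u => f (Sum.inl u)) a v) x := by
  rw [elemDiff_apply, sum_filter, ← (Equiv.sumArrowEquivProdArrow V V' (Fin d)).symm.sum_comp,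
    Fintype.sum_prod_type, sum_comm]
  refine sum_congr rfl fun b _ => ?_
  simp only [mul_sum, sum_filter, mul_ite, mul_zero]
  refine sum_congr rfl fun a _ => ?_
  rw [hroot]
  exact if_congr Iff.rfl (elemDiffTerm_graft hE hf a b x) rfl

end Graft

/-- `g v` is `s ↷_v τ` on the vertex set `V ⊕ V'`, so the left side is `F(s ↷ τ)`. -/
theorem elemDiff_graft_general (d : ℕ) {V V' : Type} [Fintype V] [DecidableEq V]
    [Fintype V'] [DecidableEq V'] (τ : RTree V) (s : RTree V')
    (g : V → RTree (V ⊕ V'))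
    (hgE : ∀ v : V, (g v).E =
      τ.E.image (Prod.map Sum.inl Sum.inl) ∪ s.E.image (Prod.map Sum.inr Sum.inr) ∪
        {(Sum.inl v, Sum.inr s.root)})
    (hgroot : ∀ v : V, (g v).root = Sum.inl τ.root)
    (f : V ⊕ V' → SmoothMapD d) (x : Fin d → ℝ) (j : Fin d) :
    ∑ v : V, Fel d (g v) f x j =
      tri (Fel d τ (fun v => f (Sum.inl v))) (Fel d s (fun u => f (Sum.inr u))) x j := by
  have hf : ∀ w, ContDiff ℝ ∞ (f w).1 := fun w => contDiff_infty.2 (f w).2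
  simp only [Fel, elemDiff_graft_apply (hgE _) hf (hgroot _), tri_elemDiff_apply,
    pd_elemDiff_apply (fun u => hf (Sum.inl u)), pd_elemDiffTerm (fun u => hf (Sum.inl u))]
  rw [sum_comm]
  refine sum_congr rfl fun b _ => ?_
  rw [← mul_sum, sum_comm]

/-- Elementary differentials turn grafting into the pre-Lie product `◁`: if `σ` is a rooted
tree on `V'`, `τ` a rooted tree on `V`, and for each `v ∈ V` the tree `g v` on the disjoint
union `V ⊕ V'` is obtained by grafting `σ` on the vertex `v` of `τ`, then
`F(σ ↷ τ) = Σ_v F(g v) = F(τ) ◁ F(σ)`. -/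
theorem elemDiff_graft (d : ℕ) (hd : 1 ≤ d) {V V' : Type} [Fintype V] [DecidableEq V]
    [Fintype V'] [DecidableEq V'] (τ : RTree V) (s : RTree V')
    (g : V → RTree (V ⊕ V'))
    (hgE : ∀ v : V, (g v).E =
      τ.E.image (Prod.map Sum.inl Sum.inl) ∪ s.E.image (Prod.map Sum.inr Sum.inr) ∪
        {(Sum.inl v, Sum.inr s.root)})
    (hgroot : ∀ v : V, (g v).root = Sum.inl τ.root)
    (f : V ⊕ V' → SmoothMapD d) (x : Fin d → ℝ) (j : Fin d) :
    ∑ v : V, Fel d (g v) f x j =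
      tri (Fel d τ (fun v => f (Sum.inl v))) (Fel d s (fun u => f (Sum.inr u))) x j :=
  elemDiff_graft_general d τ s g hgE hgroot f x j
end

section
/- In dimension 2, elementary differentials evaluated on at most two distinct functions already separate rooted trees: let n ≥ 1 and τ_1, τ_2 ∈ RT(n), and suppose that for every map x : [n] → {1,2} and all f, g ∈ C_2, one has F(τ_1)(h^{x(1)},…,h^{x(n)}) = F(τ_2)(h^{x(1)},…,h^{x(n)}), where h^1 = f and h^2 = g. Then τ_1 = τ_2. (This is the concrete content of the fact that for d ≠ 1, RT is the only 2-weak combinatorial description of W_d compatible with RT.) -/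
open Finset

/-! Test against `f = exp ⟪M₀, y⟫ e₀` and `g = exp ⟪M₁, y⟫ e₁`, where `M₀, M₁` are the rows of an
arbitrary matrix `M`. In the closed form of `F(τ)` only the index choice `idx = x` survives, and at
`y = 0` the elementary differential becomes `e_{x(root)} ∏_{(p, c) ∈ E} M_{x(p), x(c)}`. With `M`
all ones and `x` vanishing exactly at the root of `τ₁`, this forces the roots to agree. With
`M₁₁ = 0`, the other entries `1`, and `x` the indicator of `{u, v}`, the product vanishes iff `u`
and `v` are adjacent. A rooted tree is determined by its root and its underlying undirected
graph, since every edge points away from the root. -/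

open Matrix

section ExponentialModes

variable {d : ℕ}

theorem hasFDerivAt_dotProduct (c y : Fin d → ℝ) :
    HasFDerivAt (c ⬝ᵥ ·) (LinearMap.toContinuousLinearMap (dotProductEquiv ℝ (Fin d) c)) y :=
  (LinearMap.toContinuousLinearMap (dotProductEquiv ℝ (Fin d) c)).hasFDerivAt

theorem pd_const_mul_exp_dotProduct (c : Fin d → ℝ) (r : ℝ) (i : Fin d) :
    pd i (fun y => r * Real.exp (c ⬝ᵥ y)) = fun y => r * c i * Real.exp (c ⬝ᵥ y) := by
  funext y
  rw [pd, (((hasFDerivAt_dotProduct c y).exp).const_mul r).fderiv]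
  simp
  ring

theorem pdList_exp_dotProduct (c : Fin d → ℝ) (l : List (Fin d)) :
    pdList l (fun y => Real.exp (c ⬝ᵥ y)) = fun y => (l.map c).prod * Real.exp (c ⬝ᵥ y) := by
  induction l with
  | nil => simp [pdList]
  | cons i l ih =>
    change pd i (pdList l _) = _
    rw [ih, pd_const_mul_exp_dotProduct]
    funext y
    simp only [List.map_cons, List.prod_cons]
    ring

theorem pdList_zero (l : List (Fin d)) : pdList l (0 : (Fin d → ℝ) → ℝ) = 0 := by
  induction l with
  | nil => rfl
  | cons i l ih =>
    change pd i (pdList l 0) = 0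
    rw [ih]
    funext y
    simp [pd]

noncomputable def expMode (c : Fin d → ℝ) (k : Fin d) : SmoothMapD d :=
  ⟨fun y => Pi.single k (Real.exp (c ⬝ᵥ y)), fun _ => by
    refine contDiff_pi.2 fun i => ?_
    simp only [Pi.single_apply]
    split_ifs
    · exact Real.contDiff_exp.comp
        (LinearMap.toContinuousLinearMap (dotProductEquiv ℝ (Fin d) c)).contDiff
    · exact contDiff_const⟩

theorem expMode_component (c : Fin d → ℝ) (k i : Fin d) :
    (fun y => (expMode c k).1 y i) = if i = k then fun y => Real.exp (c ⬝ᵥ y) else 0 := by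
  funext y
  split_ifs with h <;> simp [expMode, h]

end ExponentialModes

namespace RTree

variable {V : Type} [Fintype V] [DecidableEq V] (τ : RTree V)

theorem prod_children_eq_prod_E {M : Type*} [CommMonoid M] (φ : V → V → M) :
    ∏ v, ∏ w ∈ τ.children v, φ v w = ∏ e ∈ τ.E, φ e.1 e.2 := by
  simp only [children, Finset.prod_filter]
  rw [← Fintype.prod_prod_type' (fun v w => if (v, w) ∈ τ.E then φ v w else 1),
    Finset.prod_ite_mem, Finset.univ_inter]

def Adj (u v : V) : Prop := (u, v) ∈ τ.E ∨ (v, u) ∈ τ.E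

theorem ne_root_of_mem_E {u v : V} (h : (u, v) ∈ τ.E) : v ≠ τ.root := by
  rintro rfl
  exact τ.root_no_parent u h

theorem parent_eq {u w v : V} (hu : (u, v) ∈ τ.E) (hw : (w, v) ∈ τ.E) : u = w :=
  (τ.parent_unique v (τ.ne_root_of_mem_E hu)).unique hu hw

theorem not_mem_E_swap {u v : V} (h : (u, v) ∈ τ.E) : (v, u) ∉ τ.E := by
  intro h'
  -- passing to parents from `v` never leaves `{u, v}`, yet both have a parent
  have closed : ∀ z, Relation.ReflTransGen (fun a b => (b, a) ∈ τ.E) v z → z = u ∨ z = v := by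
    intro z hz
    induction hz with
    | refl => exact Or.inr rfl
    | tail _ hbz ih =>
      rcases ih with rfl | rfl
      · exact Or.inr (τ.parent_eq hbz h')
      · exact Or.inl (τ.parent_eq hbz h)
  rcases closed _ (τ.reaches_root v) with hr | hr
  · exact τ.ne_root_of_mem_E h' hr.symm
  · exact τ.ne_root_of_mem_E h hr.symm

theorem not_mem_E_self (v : V) : (v, v) ∉ τ.E := fun h => τ.not_mem_E_swap h h

theorem adj_iff_exists_mem_E (u v : V) :
    τ.Adj u v ↔ ∃ e ∈ τ.E, (e.1 = u ∨ e.1 = v) ∧ (e.2 = u ∨ e.2 = v) := by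
  constructor
  · rintro (h | h)
    · exact ⟨_, h, Or.inl rfl, Or.inr rfl⟩
    · exact ⟨_, h, Or.inr rfl, Or.inl rfl⟩
  · rintro ⟨⟨a, b⟩, he, ha, hb⟩
    dsimp only at ha hb
    rcases ha with rfl | rfl <;> rcases hb with rfl | rfl
    exacts [absurd he (τ.not_mem_E_self _), Or.inl he, Or.inr he, absurd he (τ.not_mem_E_self _)]

theorem E_subset_of_adj {τ₁ τ₂ : RTree V} (hroot : τ₁.root = τ₂.root)
    (hadj : ∀ u v, τ₁.Adj u v → τ₂.Adj u v) : τ₁.E ⊆ τ₂.E := by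
  suffices H : ∀ v, Relation.ReflTransGen (fun a b => (b, a) ∈ τ₁.E) v τ₁.root →
      ∀ u, (u, v) ∈ τ₁.E → (u, v) ∈ τ₂.E from
    fun ⟨u, v⟩ he => H v (τ₁.reaches_root v) u he
  intro v hv
  induction hv using Relation.ReflTransGen.head_induction_on with
  | refl => exact fun u hu => absurd hu (τ₁.root_no_parent u)
  | head hvw _ ih =>
    intro u hu
    obtain rfl := τ₁.parent_eq hu hvw
    refine (hadj u _ (Or.inl hu)).resolve_right fun hswap => ?_
    -- the `τ₁`-parent of `u` is also its `τ₂`-parent, hence equal to the child in `hu`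
    obtain ⟨q, hq, -⟩ := τ₁.parent_unique u (hroot ▸ τ₂.ne_root_of_mem_E hswap)
    exact τ₁.not_mem_E_swap hu (τ₂.parent_eq hswap (ih q hq) ▸ hq)

theorem eq_of_root_eq_of_adj_iff {τ₁ τ₂ : RTree V} (hroot : τ₁.root = τ₂.root)
    (hadj : ∀ u v, τ₁.Adj u v ↔ τ₂.Adj u v) : τ₁ = τ₂ := by
  have hE : τ₁.E = τ₂.E := (E_subset_of_adj hroot fun u v => (hadj u v).1).antisymm
    (E_subset_of_adj hroot.symm fun u v => (hadj u v).2)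
  cases τ₁
  cases τ₂
  cases hE
  cases hroot
  rfl

end RTree

theorem elemDiff_expMode {V : Type} [Fintype V] [DecidableEq V] {d : ℕ} (τ : RTree V)
    (c : V → Fin d → ℝ) (k : V → Fin d) (y : Fin d → ℝ) (j : Fin d) :
    elemDiff τ (fun v => (expMode (c v) (k v)).1) y j =
      if k τ.root = j then (∏ e ∈ τ.E, c e.1 (k e.2)) * ∏ v, Real.exp (c v ⬝ᵥ y) else 0 := by
  rw [elemDiff, Finset.sum_eq_single_of_mem k (Finset.mem_univ _)]
  · refine if_congr Iff.rfl ?_ rfl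
    simp only [expMode_component, ↓reduceIte, pdList_exp_dotProduct, List.map_map,
      Finset.prod_map_toList, Finset.prod_mul_distrib]
    exact congrArg (· * _) (τ.prod_children_eq_prod_E fun v w => c v (k w))
  · intro idx _ hidx
    obtain ⟨v, hv⟩ : ∃ v, idx v ≠ k v := Function.ne_iff.1 hidx
    refine ite_eq_right_iff.2 fun _ => Finset.prod_eq_zero (Finset.mem_univ v) ?_
    rw [expMode_component, if_neg hv, pdList_zero]
    rfl

theorem Fel_two_ite_expMode {V : Type} [Fintype V] [DecidableEq V] (τ : RTree V)
    (x : V → Fin 2) (M : Matrix (Fin 2) (Fin 2) ℝ) (j : Fin 2) :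
    Fel 2 τ (fun v => if x v = 0 then expMode (M 0) 0 else expMode (M 1) 1) 0 j =
      if x τ.root = j then ∏ e ∈ τ.E, M (x e.1) (x e.2) else 0 := by
  have hx (v : V) : (if x v = 0 then expMode (M 0) 0 else expMode (M 1) 1) =
      expMode (M (x v)) (x v) := by
    generalize x v = i
    fin_cases i <;> rfl
  simp [Fel, hx, elemDiff_expMode]

theorem two_functions_separate_trees_general (n : ℕ) (τ₁ τ₂ : RTree (Fin n))
    (h : ∀ (x : Fin n → Fin 2) (f g : SmoothMapD 2),
      Fel 2 τ₁ (fun i => if x i = 0 then f else g) =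
      Fel 2 τ₂ (fun i => if x i = 0 then f else g)) :
    τ₁ = τ₂ := by
  have key (x : Fin n → Fin 2) (M : Matrix (Fin 2) (Fin 2) ℝ) (j : Fin 2) :
      (if x τ₁.root = j then ∏ e ∈ τ₁.E, M (x e.1) (x e.2) else 0) =
        if x τ₂.root = j then ∏ e ∈ τ₂.E, M (x e.1) (x e.2) else 0 := by
    simpa only [Fel_two_ite_expMode] using
      congrFun (congrFun (h x (expMode (M 0) 0) (expMode (M 1) 1)) 0) j
  have hroot : τ₁.root = τ₂.root := by
    simpa [eq_comm] using key (fun w => if w = τ₁.root then 0 else 1) (fun _ _ => 1) 0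
  refine RTree.eq_of_root_eq_of_adj_iff hroot fun u v => ?_
  let x : Fin n → Fin 2 := fun w => if w = u ∨ w = v then 1 else 0
  have hprod := key x (fun i j => if i = 1 ∧ j = 1 then 0 else 1) (x τ₁.root)
  rw [if_pos rfl, if_pos (by rw [hroot])] at hprod
  rw [τ₁.adj_iff_exists_mem_E, τ₂.adj_iff_exists_mem_E]
  simpa [x, Finset.prod_eq_zero_iff, or_iff_not_imp_left] using congrArg (· = 0) hprod

/-- Theorem 6.1, concrete form: in dimension `2`, elementary differentials evaluated on at
most two distinct smooth functions already separate rooted trees. -/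
theorem two_functions_separate_trees (n : ℕ) (hn : 1 ≤ n) (τ₁ τ₂ : RTree (Fin n))
    (h : ∀ (x : Fin n → Fin 2) (f g : SmoothMapD 2),
      Fel 2 τ₁ (fun i => if x i = 0 then f else g) =
      Fel 2 τ₂ (fun i => if x i = 0 then f else g)) :
    τ₁ = τ₂ :=
  two_functions_separate_trees_general n τ₁ τ₂ h
end
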